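/- The three projections $P_{sk}$ (skew-symmetrization over the first $q$ arguments), $P_{spl}$ (projection onto simple functions) and $P_{(q+1)\text{-hom}}$ (projection onto fiberwise $(q+1)$-homogeneous functions via the $(q+1)$-st Taylor coefficient of $f(\lambda v_1, \dots, \lambda v_q, \lambda \xi)$ at $\lambda = 0$) on smooth functions on $V^q \times W^*$ pairwise commute, so their composite $P_{ext} = P_{sk} \circ P_{spl} \circ P_{(q+1)\text{-hom}}$ is a projection onto the simple, skew-symmetric, $(q+1)$-homogeneous functions. -/

import Mathlib

section

variable {V W : Type*} [AddCommGroup V] [Module ℝ V] [AddCommGroup W] [Module ℝ W]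
  {q : ℕ}

/-- Put zeros in the slots of `V^q × W^*` indexed by `I ⊆ {1,…,q+1}` (the first
`q` slots are the `V`-arguments, the last one the `W^*`-argument). -/
def zeroSlots (I : Finset (Fin (q + 1)))
    (x : (Fin q → V) × Module.Dual ℝ W) : (Fin q → V) × Module.Dual ℝ W :=
  (fun i => if i.castSucc ∈ I then 0 else x.1 i,
    if Fin.last q ∈ I then 0 else x.2)

/-- `0_I^*`: precompose with putting zeros in the slots indexed by `I`. -/
def zeroPull (I : Finset (Fin (q + 1)))
    (f : (Fin q → V) × Module.Dual ℝ W → ℝ) :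
    (Fin q → V) × Module.Dual ℝ W → ℝ :=
  fun x => f (zeroSlots I x)

/-- The recursive operators `P_{(l)}` (with `simpleProj (l+1) = P_{(l)}`);
`P_{spl} = simpleProj (q+1)` is the projection onto simple functions. -/
def simpleProj : ℕ → ((Fin q → V) × Module.Dual ℝ W → ℝ) →
    (Fin q → V) × Module.Dual ℝ W → ℝ
  | 0, f => f
  | l + 1, f =>
      simpleProj l f -
        ∑ I ∈ Finset.univ.filter fun I : Finset (Fin (q + 1)) => I.card = q + 1 - l,
          zeroPull I (simpleProj l f)

/-- The projection onto `(q+1)`-homogeneous functions: the `(q+1)`-st Taylor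
coefficient of `λ ↦ f(λv₁,…,λv_q,λξ)` at `λ = 0`. -/
noncomputable def homogProj (f : (Fin q → V) × Module.Dual ℝ W → ℝ) :
    (Fin q → V) × Module.Dual ℝ W → ℝ :=
  fun x => ((q + 1).factorial : ℝ)⁻¹ *
    iteratedDeriv (q + 1) (fun t : ℝ => f (fun i => t • x.1 i, t • x.2)) 0

/-- Skew-symmetrization over the first `q` arguments. -/
noncomputable def skewProj (f : (Fin q → V) × Module.Dual ℝ W → ℝ) :
    (Fin q → V) × Module.Dual ℝ W → ℝ :=
  fun x => (q.factorial : ℝ)⁻¹ *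
    ∑ σ : Equiv.Perm (Fin q),
      ((Equiv.Perm.sign σ : ℤ) : ℝ) * f (fun i => x.1 (σ i), x.2)

/-- `f` vanishes whenever one of its `q+1` arguments is zero. -/
def IsSimple (f : (Fin q → V) × Module.Dual ℝ W → ℝ) : Prop :=
  ∀ i : Fin (q + 1), zeroPull {i} f = 0

/-- `f` is skew-symmetric in its first `q` arguments. -/
def IsSkew (f : (Fin q → V) × Module.Dual ℝ W → ℝ) : Prop :=
  ∀ (σ : Equiv.Perm (Fin q)) (x : (Fin q → V) × Module.Dual ℝ W),
    f (fun i => x.1 (σ i), x.2) = ((Equiv.Perm.sign σ : ℤ) : ℝ) * f x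

/-- `f` is `(q+1)`-homogeneous under simultaneous scaling of all arguments. -/
def IsHomog (f : (Fin q → V) × Module.Dual ℝ W → ℝ) : Prop :=
  ∀ (x : (Fin q → V) × Module.Dual ℝ W) (t : ℝ), 0 ≤ t →
    f (fun i => t • x.1 i, t • x.2) = t ^ (q + 1) * f x

end

set_option linter.unusedSectionVars false

section Aux

variable {V W : Type*} [AddCommGroup V] [Module ℝ V] [AddCommGroup W] [Module ℝ W]
  {q : ℕ}

noncomputable def smulPt (t : ℝ) (x : (Fin q → V) × Module.Dual ℝ W) :
    (Fin q → V) × Module.Dual ℝ W :=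
  (fun i => t • x.1 i, t • x.2)

def permPt (σ : Equiv.Perm (Fin q)) (x : (Fin q → V) × Module.Dual ℝ W) :
    (Fin q → V) × Module.Dual ℝ W :=
  (fun i => x.1 (σ i), x.2)

lemma zeroSlots_zeroSlots (I J : Finset (Fin (q + 1)))
    (x : (Fin q → V) × Module.Dual ℝ W) :
    zeroSlots I (zeroSlots J x) = zeroSlots (I ∪ J) x := by
  unfold zeroSlots
  refine Prod.ext (funext fun i => ?_) ?_ <;> simp only [Finset.mem_union] <;>
    split_ifs <;> tauto

lemma zeroSlots_smulPt (I : Finset (Fin (q + 1))) (t : ℝ)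
    (x : (Fin q → V) × Module.Dual ℝ W) :
    zeroSlots I (smulPt t x) = smulPt t (zeroSlots I x) := by
  unfold zeroSlots smulPt
  refine Prod.ext (funext fun i => ?_) ?_ <;> simp <;> split_ifs <;> simp

lemma smulPt_smulPt (s t : ℝ) (x : (Fin q → V) × Module.Dual ℝ W) :
    smulPt s (smulPt t x) = smulPt (t * s) x := by
  unfold smulPt
  refine Prod.ext (funext fun i => ?_) ?_ <;> simp [smul_smul] <;> ring_nf

/-- kill nonempty-indexed slots kills one slot -/
lemma zeroPull_eq_zero_of_isSimple {f : (Fin q → V) × Module.Dual ℝ W → ℝ}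
    (hf : IsSimple f) {I : Finset (Fin (q + 1))} (hI : I.Nonempty) :
    zeroPull I f = 0 := by
  obtain ⟨i, hi⟩ := hI
  funext x
  have h1 : zeroSlots I x = zeroSlots {i} (zeroSlots (I.erase i) x) := by
    rw [zeroSlots_zeroSlots]
    congr 1
    ext a
    simp only [Finset.mem_union, Finset.mem_erase, Finset.mem_singleton]
    by_cases h : a = i <;> subst_eqs <;> tauto
  have := congrFun (hf i) (zeroSlots (I.erase i) x)
  simpa [zeroPull, h1] using this

/-- key combinatorial lemma: subsets of large cardinality kill `simpleProj l` -/
lemma zeroPull_simpleProj (g : (Fin q → V) × Module.Dual ℝ W → ℝ) :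
    ∀ (l : ℕ) (I : Finset (Fin (q + 1))), q + 2 ≤ l + I.card →
      zeroPull I (simpleProj l g) = 0 := by
  intro l
  induction l with
  | zero =>
      intro I hI
      exfalso
      have := I.card_le_univ
      simp [Finset.card_univ] at this
      omega
  | succ l ih =>
      intro J hJ
      funext x
      have hexp : simpleProj (l + 1) g = simpleProj l g -
          ∑ I ∈ Finset.univ.filter fun I : Finset (Fin (q + 1)) => I.card = q + 1 - l,
            zeroPull I (simpleProj l g) := rfl
      have hA : ∀ K : Finset (Fin (q+1)), q + 2 ≤ l + K.card →
          ∀ y, simpleProj l g (zeroSlots K y) = 0 := by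
        intro K hK y
        simpa [zeroPull] using congrFun (ih K hK) y
      simp only [zeroPull, hexp, Pi.sub_apply, Finset.sum_apply, Pi.zero_apply,
        zeroSlots_zeroSlots]
      by_cases hc : q + 2 ≤ l + J.card
      · rw [hA J hc x, Finset.sum_eq_zero, sub_zero]
        intro I hI
        apply hA
        have := Finset.card_le_card (Finset.subset_union_right (s₁ := I) (s₂ := J))
        omega
      · have hJc : J.card = q + 1 - l := by omega
        rw [sub_eq_zero, Finset.sum_eq_single J]
        · rw [Finset.union_self]
        · intro I hI hne
          simp only [Finset.mem_filter] at hI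
          apply hA
          have hlt : J.card < (I ∪ J).card := by
            refine Finset.card_lt_card
              (Finset.ssubset_iff_subset_ne.mpr ⟨Finset.subset_union_right, fun hEq => hne ?_⟩)
            have hIJ : I ⊆ J := by
              have h2 := Finset.subset_union_left (s₁ := I) (s₂ := J)
              rwa [← hEq] at h2
            exact Finset.eq_of_subset_of_card_le hIJ (by omega)
          omega
        · intro h
          exact absurd (Finset.mem_filter.mpr ⟨Finset.mem_univ J, hJc⟩) h

/-- extend a permutation of `Fin q` to `Fin (q+1)` fixing the last element -/
def pe (σ : Equiv.Perm (Fin q)) : Equiv.Perm (Fin (q + 1)) :=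
  finSuccEquivLast.trans ((Equiv.optionCongr σ).trans finSuccEquivLast.symm)

@[simp] lemma pe_castSucc (σ : Equiv.Perm (Fin q)) (i : Fin q) :
    pe σ i.castSucc = (σ i).castSucc := by
  simp [pe]

@[simp] lemma pe_last (σ : Equiv.Perm (Fin q)) :
    pe σ (Fin.last q) = Fin.last q := by
  simp [pe]

lemma map_map_symm {n : ℕ} (e : Equiv.Perm (Fin n)) (I : Finset (Fin n)) :
    (I.map e.toEmbedding).map e.symm.toEmbedding = I := by
  ext a
  simp [Finset.mem_map_equiv]

lemma map_symm_map {n : ℕ} (e : Equiv.Perm (Fin n)) (I : Finset (Fin n)) :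
    (I.map e.symm.toEmbedding).map e.toEmbedding = I := by
  have := map_map_symm e.symm I
  simpa using this

lemma zeroSlots_permPt (σ : Equiv.Perm (Fin q)) (I : Finset (Fin (q + 1)))
    (x : (Fin q → V) × Module.Dual ℝ W) :
    zeroSlots I (permPt σ x) = permPt σ (zeroSlots (I.map (pe σ).toEmbedding) x) := by
  unfold permPt zeroSlots
  refine Prod.ext (funext fun k => ?_) ?_
  · have : k.castSucc ∈ I ↔ (σ k).castSucc ∈ I.map (pe σ).toEmbedding := by
      rw [← pe_castSucc σ k]
      exact (Finset.mem_map' _).symm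
    simp only [this]
  · have : Fin.last q ∈ I ↔ Fin.last q ∈ I.map (pe σ).toEmbedding := by
      nth_rewrite 2 [← pe_last σ]
      exact (Finset.mem_map' _).symm
    simp only [this]

lemma permPt_zeroSlots (σ : Equiv.Perm (Fin q)) (J : Finset (Fin (q + 1)))
    (x : (Fin q → V) × Module.Dual ℝ W) :
    permPt σ (zeroSlots J x) = zeroSlots (J.map (pe σ).symm.toEmbedding) (permPt σ x) := by
  rw [zeroSlots_permPt σ (J.map (pe σ).symm.toEmbedding) x, map_symm_map]

lemma permPt_permPt (σ τ : Equiv.Perm (Fin q)) (x : (Fin q → V) × Module.Dual ℝ W) :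
    permPt σ (permPt τ x) = permPt (τ * σ) x := rfl

/-- real-valued sign -/
noncomputable def sgn (σ : Equiv.Perm (Fin q)) : ℝ := ((Equiv.Perm.sign σ : ℤ) : ℝ)

lemma sgn_mul (σ τ : Equiv.Perm (Fin q)) : sgn (σ * τ) = sgn σ * sgn τ := by
  unfold sgn
  rw [map_mul]
  push_cast
  ring

lemma sgn_sq (σ : Equiv.Perm (Fin q)) : sgn σ * sgn σ = 1 := by
  unfold sgn
  rcases Int.units_eq_one_or (Equiv.Perm.sign σ) with h | h <;> rw [h] <;> norm_num

lemma skewProj_apply (g : (Fin q → V) × Module.Dual ℝ W → ℝ)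
    (x : (Fin q → V) × Module.Dual ℝ W) :
    skewProj g x = (q.factorial : ℝ)⁻¹ * ∑ σ : Equiv.Perm (Fin q), sgn σ * g (permPt σ x) := rfl

lemma isSkew_skewProj (g : (Fin q → V) × Module.Dual ℝ W → ℝ) :
    IsSkew (skewProj g) := by
  intro τ x
  have key : skewProj g (permPt τ x) = sgn τ * skewProj g x := by
    rw [skewProj_apply, skewProj_apply]
    have h1 : ∀ σ : Equiv.Perm (Fin q),
        sgn σ * g (permPt σ (permPt τ x)) = sgn τ * (sgn (τ * σ) * g (permPt (τ * σ) x)) := by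
      intro σ
      rw [permPt_permPt, sgn_mul, ← mul_assoc, ← mul_assoc, sgn_sq, one_mul]
    have hs : ∑ σ : Equiv.Perm (Fin q), sgn (τ * σ) * g (permPt (τ * σ) x)
        = ∑ ρ : Equiv.Perm (Fin q), sgn ρ * g (permPt ρ x) := by
      have := Equiv.sum_comp (Equiv.mulLeft τ)
        (fun ρ => sgn ρ * g (permPt ρ x))
      simpa using this
    rw [Finset.sum_congr rfl fun σ _ => h1 σ, ← Finset.mul_sum, hs]
    ring
  simpa [permPt, sgn] using key

lemma isSimple_skewProj {g : (Fin q → V) × Module.Dual ℝ W → ℝ}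
    (hg : IsSimple g) : IsSimple (skewProj g) := by
  intro i
  funext x
  have hz : ∀ σ : Equiv.Perm (Fin q), g (permPt σ (zeroSlots {i} x)) = 0 := by
    intro σ
    rw [permPt_zeroSlots, Finset.map_singleton]
    exact congrFun (hg ((pe σ).symm i)) (permPt σ x)
  simp only [zeroPull, Pi.zero_apply]
  rw [skewProj_apply]
  rw [Finset.sum_congr rfl fun σ _ => by rw [hz σ, mul_zero]]
  simp

lemma skewProj_sub (g h : (Fin q → V) × Module.Dual ℝ W → ℝ) :
    skewProj (g - h) = skewProj g - skewProj h := by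
  funext x
  simp only [Pi.sub_apply, skewProj_apply, mul_sub, Finset.sum_sub_distrib]

lemma skewProj_sum_zeroPull (h : (Fin q → V) × Module.Dual ℝ W → ℝ) (k : ℕ) :
    skewProj (∑ I ∈ Finset.univ.filter fun I : Finset (Fin (q + 1)) => I.card = k,
        zeroPull I h) =
      ∑ I ∈ Finset.univ.filter fun I : Finset (Fin (q + 1)) => I.card = k,
        zeroPull I (skewProj h) := by
  funext x
  simp only [Finset.sum_apply, zeroPull, skewProj_apply, Finset.mul_sum]
  conv_rhs => rw [Finset.sum_comm]
  refine Finset.sum_congr rfl fun σ _ => ?_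
  simp only [permPt_zeroSlots]
  refine Finset.sum_equiv (Equiv.finsetCongr (pe σ)) (fun I => ?_) (fun I hI => ?_)
  · simp
  · simp only [Equiv.finsetCongr_apply]
    rw [map_map_symm]
-- plain iteratedDeriv linearity helpers
lemma itd_cmul {n : ℕ} {f : ℝ → ℝ} (hf : ContDiff ℝ n f) (c x : ℝ) :
    iteratedDeriv n (fun t => c * f t) x = c * iteratedDeriv n f x := by
  rw [← iteratedDerivWithin_univ, ← iteratedDerivWithin_univ]
  exact iteratedDerivWithin_const_mul (Set.mem_univ x) uniqueDiffOn_univ c hf.contDiffWithinAt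

lemma itd_sub {n : ℕ} {f g : ℝ → ℝ} (hf : ContDiff ℝ n f) (hg : ContDiff ℝ n g) (x : ℝ) :
    iteratedDeriv n (fun t => f t - g t) x = iteratedDeriv n f x - iteratedDeriv n g x := by
  rw [← iteratedDerivWithin_univ, ← iteratedDerivWithin_univ, ← iteratedDerivWithin_univ]
  exact iteratedDerivWithin_sub (Set.mem_univ x) uniqueDiffOn_univ hf.contDiffWithinAt hg.contDiffWithinAt

lemma itd_sum {n : ℕ} {ι : Type*} (s : Finset ι) {F : ι → ℝ → ℝ}
    (hF : ∀ i ∈ s, ContDiff ℝ n (F i)) (x : ℝ) :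
    iteratedDeriv n (fun t => ∑ i ∈ s, F i t) x = ∑ i ∈ s, iteratedDeriv n (F i) x := by
  classical
  induction s using Finset.induction_on with
  | empty => simp [iteratedDeriv, iteratedFDeriv_zero_fun]
  | insert a s hni ih =>
      have h1 : ContDiff ℝ n (F a) := hF a (Finset.mem_insert_self a s)
      have h2 : ∀ i ∈ s, ContDiff ℝ n (F i) := fun i hi => hF i (Finset.mem_insert_of_mem hi)
      have h3 : ContDiff ℝ n (fun t => ∑ i ∈ s, F i t) := ContDiff.sum h2
      simp only [Finset.sum_insert hni]
      rw [← ih h2]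
      rw [← iteratedDerivWithin_univ, ← iteratedDerivWithin_univ, ← iteratedDerivWithin_univ]
      exact iteratedDerivWithin_add (Set.mem_univ x) uniqueDiffOn_univ
        h1.contDiffWithinAt h3.contDiffWithinAt
/-- the curve `t ↦ g (t • x)` -/
noncomputable def crv (g : (Fin q → V) × Module.Dual ℝ W → ℝ)
    (x : (Fin q → V) × Module.Dual ℝ W) : ℝ → ℝ :=
  fun t => g (smulPt t x)

lemma homogProj_apply (g : (Fin q → V) × Module.Dual ℝ W → ℝ)
    (x : (Fin q → V) × Module.Dual ℝ W) :
    homogProj g x = ((q + 1).factorial : ℝ)⁻¹ * iteratedDeriv (q + 1) (crv g x) 0 := rfl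

/-- all curves of `g` are smooth -/
def Nice (g : (Fin q → V) × Module.Dual ℝ W → ℝ) : Prop :=
  ∀ x, ContDiff ℝ (⊤ : ℕ∞) (crv g x)

lemma crv_zeroPull (I : Finset (Fin (q + 1))) (g : (Fin q → V) × Module.Dual ℝ W → ℝ)
    (x : (Fin q → V) × Module.Dual ℝ W) :
    crv (zeroPull I g) x = crv g (zeroSlots I x) := by
  funext t
  simp only [crv, zeroPull, zeroSlots_smulPt]

lemma permPt_smulPt (σ : Equiv.Perm (Fin q)) (t : ℝ)
    (x : (Fin q → V) × Module.Dual ℝ W) :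
    permPt σ (smulPt t x) = smulPt t (permPt σ x) := rfl

lemma crv_smulPt (g : (Fin q → V) × Module.Dual ℝ W → ℝ) (t : ℝ)
    (x : (Fin q → V) × Module.Dual ℝ W) :
    crv g (smulPt t x) = fun s => crv g x (t * s) := by
  funext s
  simp only [crv, smulPt_smulPt]

lemma Nice.zeroPull {g : (Fin q → V) × Module.Dual ℝ W → ℝ} (hg : Nice g)
    (I : Finset (Fin (q + 1))) : Nice (zeroPull I g) := by
  intro x
  rw [crv_zeroPull]
  exact hg _

lemma Nice.sub {g h : (Fin q → V) × Module.Dual ℝ W → ℝ} (hg : Nice g) (hh : Nice h) :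
    Nice (g - h) := by
  intro x
  have : crv (g - h) x = fun t => crv g x t - crv h x t := rfl
  rw [this]
  exact (hg x).sub (hh x)

lemma Nice.sum {ι : Type*} (s : Finset ι) {F : ι → (Fin q → V) × Module.Dual ℝ W → ℝ}
    (hF : ∀ i ∈ s, Nice (F i)) : Nice (∑ i ∈ s, F i) := by
  intro x
  have : crv (∑ i ∈ s, F i) x = fun t => ∑ i ∈ s, crv (F i) x t := by
    funext t
    simp [crv, Finset.sum_apply]
  rw [this]
  exact ContDiff.sum fun i hi => hF i hi x

lemma Nice.simpleProj {f : (Fin q → V) × Module.Dual ℝ W → ℝ} (hf : Nice f) (l : ℕ) :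
    Nice (simpleProj l f) := by
  induction l with
  | zero => exact hf
  | succ l ih =>
      exact ih.sub (Nice.sum _ fun I _ => ih.zeroPull I)

lemma homogProj_zeroPull (I : Finset (Fin (q + 1)))
    (g : (Fin q → V) × Module.Dual ℝ W → ℝ) :
    homogProj (zeroPull I g) = zeroPull I (homogProj g) := by
  funext x
  simp only [homogProj_apply, zeroPull, crv_zeroPull, homogProj_apply]

lemma homogProj_sub {g h : (Fin q → V) × Module.Dual ℝ W → ℝ} (hg : Nice g) (hh : Nice h) :
    homogProj (g - h) = homogProj g - homogProj h := by
  funext x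
  have hc : crv (g - h) x = fun t => crv g x t - crv h x t := rfl
  simp only [homogProj_apply, Pi.sub_apply, hc]
  rw [itd_sub ((hg x).of_le (by exact_mod_cast le_top)) ((hh x).of_le (by exact_mod_cast le_top)), mul_sub]

lemma homogProj_sum {ι : Type*} (s : Finset ι) {F : ι → (Fin q → V) × Module.Dual ℝ W → ℝ}
    (hF : ∀ i ∈ s, Nice (F i)) :
    homogProj (∑ i ∈ s, F i) = ∑ i ∈ s, homogProj (F i) := by
  funext x
  have hc : crv (∑ i ∈ s, F i) x = fun t => ∑ i ∈ s, crv (F i) x t := by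
    funext t; simp [crv, Finset.sum_apply]
  simp only [homogProj_apply, hc, Finset.sum_apply]
  rw [itd_sum s (fun i hi => (hF i hi x).of_le (by exact_mod_cast le_top))]
  rw [Finset.mul_sum]

lemma homogProj_simpleProj {f : (Fin q → V) × Module.Dual ℝ W → ℝ} (hf : Nice f) (l : ℕ) :
    homogProj (simpleProj l f) = simpleProj l (homogProj f) := by
  induction l with
  | zero => rfl
  | succ l ih =>
      have h1 : Nice (simpleProj l f) := hf.simpleProj l
      have hexp : simpleProj (l + 1) f = simpleProj l f -
          ∑ I ∈ Finset.univ.filter fun I : Finset (Fin (q + 1)) => I.card = q + 1 - l,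
            zeroPull I (simpleProj l f) := rfl
      rw [hexp, homogProj_sub h1 (Nice.sum _ fun I _ => h1.zeroPull I),
        homogProj_sum _ fun I _ => h1.zeroPull I, ih]
      have : ∀ I : Finset (Fin (q + 1)),
          homogProj (zeroPull I (simpleProj l f)) = zeroPull I (simpleProj l (homogProj f)) := by
        intro I
        rw [homogProj_zeroPull, ih]
      rw [Finset.sum_congr rfl fun I _ => this I]
      rfl

lemma skewProj_homogProj {f : (Fin q → V) × Module.Dual ℝ W → ℝ} (hf : Nice f) :
    skewProj (homogProj f) = homogProj (skewProj f) := by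
  funext x
  have hc : crv (skewProj f) x = fun t => ∑ σ : Equiv.Perm (Fin q),
      (q.factorial : ℝ)⁻¹ * (sgn σ * crv f (permPt σ x) t) := by
    funext t
    simp only [crv, skewProj_apply, permPt_smulPt, Finset.mul_sum]
  simp only [homogProj_apply, skewProj_apply, hc]
  rw [itd_sum Finset.univ (fun σ _ => by
    exact contDiff_const.mul (contDiff_const.mul
      ((hf (permPt σ x)).of_le (by exact_mod_cast le_top) : ContDiff ℝ (↑(q+1)) _)))]
  have : ∀ σ : Equiv.Perm (Fin q),
      iteratedDeriv (q + 1) (fun t => (q.factorial : ℝ)⁻¹ * (sgn σ * crv f (permPt σ x) t)) 0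
        = (q.factorial : ℝ)⁻¹ * (sgn σ * iteratedDeriv (q + 1) (crv f (permPt σ x)) 0) := by
    intro σ
    rw [show (fun t => (q.factorial : ℝ)⁻¹ * (sgn σ * crv f (permPt σ x) t))
        = fun t => ((q.factorial : ℝ)⁻¹ * sgn σ) * crv f (permPt σ x) t from by
      funext t; ring]
    rw [itd_cmul ((hf (permPt σ x)).of_le (by exact_mod_cast le_top))]
    ring
  rw [Finset.sum_congr rfl fun σ _ => this σ]
  rw [Finset.mul_sum, Finset.mul_sum]
  exact Finset.sum_congr rfl fun σ _ => by ring

/-- homogeneity of `homogProj` -/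
lemma homogProj_smulPt {g : (Fin q → V) × Module.Dual ℝ W → ℝ} (hg : Nice g)
    (t : ℝ) (x : (Fin q → V) × Module.Dual ℝ W) :
    homogProj g (smulPt t x) = t ^ (q + 1) * homogProj g x := by
  simp only [homogProj_apply, crv_smulPt]
  rw [show (fun s => crv g x (t * s)) = fun s => crv g x (t * s) from rfl]
  have := iteratedDeriv_comp_const_mul ((hg x).of_le (by exact_mod_cast le_top) : ContDiff ℝ (↑(q+1)) (crv g x)) t
  rw [congrFun this 0]
  rw [mul_zero]
  ring

lemma isHomog_homogProj {f : (Fin q → V) × Module.Dual ℝ W → ℝ} (hf : Nice f) :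
    IsHomog (homogProj f) := fun x t _ => homogProj_smulPt hf t x

lemma IsHomog.zp {g : (Fin q → V) × Module.Dual ℝ W → ℝ} (hg : IsHomog g)
    (I : Finset (Fin (q + 1))) : IsHomog (zeroPull I g) := by
  intro x t ht
  have h1 : zeroPull I g (smulPt t x) = g (smulPt t (zeroSlots I x)) := by
    simp only [zeroPull, zeroSlots_smulPt]
  exact h1.trans (hg (zeroSlots I x) t ht)

lemma IsHomog.sub {g h : (Fin q → V) × Module.Dual ℝ W → ℝ} (hg : IsHomog g)
    (hh : IsHomog h) : IsHomog (g - h) := by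
  intro x t ht
  simp only [Pi.sub_apply]
  rw [hg x t ht, hh x t ht]
  ring

lemma IsHomog.sum {ι : Type*} (s : Finset ι) {F : ι → (Fin q → V) × Module.Dual ℝ W → ℝ}
    (hF : ∀ i ∈ s, IsHomog (F i)) : IsHomog (∑ i ∈ s, F i) := by
  intro x t ht
  simp only [Finset.sum_apply]
  rw [Finset.sum_congr rfl fun i hi => hF i hi x t ht, ← Finset.mul_sum]

lemma IsHomog.sp {g : (Fin q → V) × Module.Dual ℝ W → ℝ} (hg : IsHomog g)
    (l : ℕ) : IsHomog (simpleProj l g) := by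
  induction l with
  | zero => exact hg
  | succ l ih => exact ih.sub (IsHomog.sum _ fun I _ => ih.zp I)

lemma IsHomog.sk {g : (Fin q → V) × Module.Dual ℝ W → ℝ} (hg : IsHomog g) :
    IsHomog (skewProj g) := by
  intro x t ht
  show skewProj g (smulPt t x) = t ^ (q + 1) * skewProj g x
  rw [skewProj_apply, skewProj_apply]
  have : ∀ σ : Equiv.Perm (Fin q),
      sgn σ * g (permPt σ (smulPt t x)) = t ^ (q + 1) * (sgn σ * g (permPt σ x)) := by
    intro σ
    rw [permPt_smulPt]
    rw [show g (smulPt t (permPt σ x)) = t ^ (q + 1) * g (permPt σ x) from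
      hg (permPt σ x) t ht]
    ring
  rw [Finset.sum_congr rfl fun σ _ => this σ, ← Finset.mul_sum]
  ring

lemma itd_eqOn_Ici {g h : ℝ → ℝ} (hg : ContDiff ℝ (⊤ : ℕ∞) g) (hh : ContDiff ℝ (⊤ : ℕ∞) h)
    (he : Set.EqOn g h (Set.Ici (0:ℝ))) (n : ℕ) :
    ∀ t ∈ Set.Ici (0:ℝ), iteratedDeriv n g t = iteratedDeriv n h t := by
  induction n with
  | zero => exact fun t ht => he ht
  | succ n ih =>
      intro t ht
      rw [iteratedDeriv_succ, iteratedDeriv_succ]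
      have hlt : (n : WithTop ℕ∞) < ((⊤ : ℕ∞) : WithTop ℕ∞) := by
        exact_mod_cast ENat.coe_lt_top n
      have hG : DifferentiableAt ℝ (iteratedDeriv n g) t :=
        (hg.differentiable_iteratedDeriv n hlt).differentiableAt
      have hH : DifferentiableAt ℝ (iteratedDeriv n h) t :=
        (hh.differentiable_iteratedDeriv n hlt).differentiableAt
      have hEq : Set.EqOn (iteratedDeriv n g) (iteratedDeriv n h) (Set.Ici 0) :=
        fun s hs => ih s hs
      have h1 : HasDerivWithinAt (iteratedDeriv n g)
          (deriv (iteratedDeriv n g) t) (Set.Ici 0) t := hG.hasDerivAt.hasDerivWithinAt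
      have h2 : HasDerivWithinAt (iteratedDeriv n h)
          (deriv (iteratedDeriv n g) t) (Set.Ici 0) t :=
        h1.congr (fun y hy => (hEq hy).symm) (hEq ht).symm
      have h3 : HasDerivWithinAt (iteratedDeriv n h)
          (deriv (iteratedDeriv n h) t) (Set.Ici 0) t := hH.hasDerivAt.hasDerivWithinAt
      exact ((uniqueDiffOn_Ici 0) t ht).eq_deriv _ h2 h3

lemma itd_pow (n : ℕ) : iteratedDeriv n (fun t : ℝ => t ^ n) = fun _ => (n.factorial : ℝ) := by
  induction n with
  | zero => funext t; simp
  | succ n ih =>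
      funext x
      rw [iteratedDeriv_succ']
      have hd : deriv (fun t : ℝ => t ^ (n + 1)) = fun t => ((n : ℝ) + 1) * t ^ n := by
        funext t
        simp [deriv_pow]
      have hp : ContDiff ℝ (↑n) (fun t : ℝ => t ^ n) := contDiff_id.pow n
      rw [hd, itd_cmul hp, congrFun ih x]
      rw [Nat.factorial_succ]
      push_cast
      ring

lemma homogProj_eq_self {f : (Fin q → V) × Module.Dual ℝ W → ℝ}
    (hN : Nice f) (hH : IsHomog f) : homogProj f = f := by
  funext x
  rw [homogProj_apply]
  have hEq : Set.EqOn (crv f x) (fun t => t ^ (q + 1) * f x) (Set.Ici 0) :=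
    fun t ht => hH x t ht
  have hpoly : ContDiff ℝ (⊤ : ℕ∞) (fun t : ℝ => t ^ (q + 1) * f x) :=
    (contDiff_id.pow _).mul contDiff_const
  rw [itd_eqOn_Ici (hN x) hpoly hEq (q + 1) 0 Set.self_mem_Ici]
  have h2 : (fun t : ℝ => t ^ (q + 1) * f x) = fun t => f x * t ^ (q + 1) := by
    funext t; ring
  have hp : ContDiff ℝ (↑(q + 1)) (fun t : ℝ => t ^ (q + 1)) := contDiff_id.pow (q + 1)
  rw [h2, itd_cmul hp, congrFun (itd_pow (q + 1)) 0]
  have hc : ((q + 1).factorial : ℝ) ≠ 0 := by exact_mod_cast (q + 1).factorial_ne_zero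
  field_simp

lemma simpleProj_eq_self {f : (Fin q → V) × Module.Dual ℝ W → ℝ} (hS : IsSimple f) :
    ∀ l, l ≤ q + 1 → simpleProj l f = f := by
  intro l
  induction l with
  | zero => intro _; rfl
  | succ l ih =>
      intro hl
      have hexp : simpleProj (l + 1) f = simpleProj l f -
          ∑ I ∈ Finset.univ.filter fun I : Finset (Fin (q + 1)) => I.card = q + 1 - l,
            zeroPull I (simpleProj l f) := rfl
      rw [hexp, ih (by omega)]
      rw [Finset.sum_eq_zero, sub_zero]
      intro I hI
      simp only [Finset.mem_filter] at hI
      apply zeroPull_eq_zero_of_isSimple hS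
      rw [← Finset.card_pos, hI.2]
      omega

lemma skewProj_eq_self {f : (Fin q → V) × Module.Dual ℝ W → ℝ} (hK : IsSkew f) :
    skewProj f = f := by
  funext x
  rw [skewProj_apply]
  have : ∀ σ : Equiv.Perm (Fin q), sgn σ * f (permPt σ x) = f x := by
    intro σ
    have := hK σ x
    rw [show f (permPt σ x) = sgn σ * f x from this, ← mul_assoc, sgn_sq, one_mul]
  rw [Finset.sum_congr rfl fun σ _ => this σ, Finset.sum_const, Finset.card_univ,
    Fintype.card_perm, Fintype.card_fin, nsmul_eq_mul, ← mul_assoc,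
    inv_mul_cancel₀ (by exact_mod_cast q.factorial_ne_zero), one_mul]

lemma isSimple_simpleProj (g : (Fin q → V) × Module.Dual ℝ W → ℝ) :
    IsSimple (simpleProj (q + 1) g) :=
  fun i => zeroPull_simpleProj g (q + 1) {i} (by simp)

lemma skewProj_simpleProj (f : (Fin q → V) × Module.Dual ℝ W → ℝ) (l : ℕ) :
    skewProj (simpleProj l f) = simpleProj l (skewProj f) := by
  induction l with
  | zero => rfl
  | succ l ih =>
      have hexp : simpleProj (l + 1) f = simpleProj l f -
          ∑ I ∈ Finset.univ.filter fun I : Finset (Fin (q + 1)) => I.card = q + 1 - l,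
            zeroPull I (simpleProj l f) := rfl
      rw [hexp, skewProj_sub, skewProj_sum_zeroPull, ih]
      rfl

end Aux

/-- The three projections `P_{sk}`, `P_{spl}` and `P_{(q+1)-hom}` on smooth
functions on `V^q × W^*` pairwise commute, so their composite
`P_{ext} = P_{sk} ∘ P_{spl} ∘ P_{(q+1)-hom}` is a projection onto the simple,
skew-symmetric, `(q+1)`-homogeneous functions. -/
theorem stmt_13 {V W : Type*} [AddCommGroup V] [Module ℝ V] [FiniteDimensional ℝ V]
    [AddCommGroup W] [Module ℝ W] [FiniteDimensional ℝ W] (q : ℕ)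
    (f : (Fin q → V) × Module.Dual ℝ W → ℝ)
    (hf : ∀ x : (Fin q → V) × Module.Dual ℝ W,
      ContDiff ℝ (⊤ : ℕ∞) fun t : ℝ => f (fun i => t • x.1 i, t • x.2)) :
    skewProj (simpleProj (q + 1) f) = simpleProj (q + 1) (skewProj f) ∧
    skewProj (homogProj f) = homogProj (skewProj f) ∧
    simpleProj (q + 1) (homogProj f) = homogProj (simpleProj (q + 1) f) ∧
    IsSimple (skewProj (simpleProj (q + 1) (homogProj f))) ∧
    IsSkew (skewProj (simpleProj (q + 1) (homogProj f))) ∧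
    IsHomog (skewProj (simpleProj (q + 1) (homogProj f))) ∧
    (IsSimple f ∧ IsSkew f ∧ IsHomog f →
      skewProj (simpleProj (q + 1) (homogProj f)) = f) := by
  have hN : Nice f := hf
  refine ⟨skewProj_simpleProj f (q + 1), skewProj_homogProj hN,
    (homogProj_simpleProj hN (q + 1)).symm,
    isSimple_skewProj (isSimple_simpleProj _), isSkew_skewProj _,
    ((isHomog_homogProj hN).sp (q + 1)).sk, ?_⟩
  rintro ⟨hS, hK, hH⟩
  rw [homogProj_eq_self hN hH, simpleProj_eq_self hS (q + 1) le_rfl, skewProj_eq_self hK]
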